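/- arXiv:1703.04864 — 2 statements merged into one kernel-verified Lean document; each statement's English description precedes it below -/
import Mathlib

section
/- With notation as in the aggregated L1-fitting problem: for any partition C of {1,…,n}, the optimal value F(C) of the aggregated problem satisfies F(C) ≤ E*, where E* = min_{X ∈ Φ} ‖B − f(X,A)‖₁ is the optimal value of the original problem. Moreover, if C is the finest partition (every cluster a singleton), then F(C) = E*. -/
open Finset

/-! Aggregation is left multiplication by the cluster-averaging matrix `W`, and
`f X (W * A) = W * f X A`, so the aggregated residual of any `X` is `W` applied to its original
residual. Weighting a cluster average by the cluster size gives back the cluster sum, so by the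
triangle inequality the aggregated objective of every `X` is at most its original one; at `Xstar`
this gives `F(C) ≤ E*`. For singleton clusters the triangle inequality is an equality, so `E*` is
at most the original objective of `Xagg`, which equals `F(C)`. -/

section ClusterMean

variable {ι κ σ : Type*}

lemma card_mul_abs_sum_div_card (s : Finset ι) (g : ι → ℝ) :
    (#s : ℝ) * |(∑ i ∈ s, g i) / #s| = |∑ i ∈ s, g i| := by
  rcases s.eq_empty_or_nonempty with rfl | hs
  · simp
  · have hcard : (0 : ℝ) < #s := by exact_mod_cast hs.card_pos
    rw [abs_div, abs_of_pos hcard, mul_div_cancel₀ _ hcard.ne']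

lemma abs_sum_eq_sum_abs_of_card_le_one {s : Finset ι} (hs : #s ≤ 1) (g : ι → ℝ) :
    |∑ i ∈ s, g i| = ∑ i ∈ s, |g i| := by
  rcases Nat.le_one_iff_eq_zero_or_eq_one.1 hs with h | h
  · simp [card_eq_zero.1 h]
  · obtain ⟨a, rfl⟩ := card_eq_one.1 h
    simp

variable [Fintype ι] [DecidableEq κ]

/-- Row `k` averages the rows of cluster `k`; an empty cluster gives a zero row. -/
noncomputable def clusterMean (c : ι → κ) : Matrix κ ι ℝ :=
  fun k i => if c i = k then ((univ.filter (fun i => c i = k)).card : ℝ)⁻¹ else 0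

lemma clusterMean_mul_apply (c : ι → κ) (M : Matrix ι σ ℝ) (k : κ) (j : σ) :
    (clusterMean c * M) k j =
      (∑ i ∈ univ.filter (fun i => c i = k), M i j) /
        ((univ.filter (fun i => c i = k)).card : ℝ) := by
  rw [Matrix.mul_apply, sum_filter, sum_div]
  refine sum_congr rfl fun i _ => ?_
  by_cases h : c i = k <;> simp [clusterMean, h, div_eq_inv_mul]

variable [Fintype κ] [Fintype σ]

lemma sum_card_mul_sum_abs_clusterMean_mul_eq (c : ι → κ) (R : Matrix ι σ ℝ) :
    ∑ k, ((univ.filter (fun i => c i = k)).card : ℝ) * ∑ j, |(clusterMean c * R) k j| =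
      ∑ k, ∑ j, |∑ i ∈ univ.filter (fun i => c i = k), R i j| := by
  simp only [mul_sum, clusterMean_mul_apply, card_mul_abs_sum_div_card]

lemma sum_card_mul_sum_abs_clusterMean_mul_le (c : ι → κ) (R : Matrix ι σ ℝ) :
    ∑ k, ((univ.filter (fun i => c i = k)).card : ℝ) * ∑ j, |(clusterMean c * R) k j| ≤
      ∑ i, ∑ j, |R i j| := by
  rw [sum_card_mul_sum_abs_clusterMean_mul_eq]
  calc ∑ k, ∑ j, |∑ i ∈ univ.filter (fun i => c i = k), R i j|
      ≤ ∑ k, ∑ j, ∑ i ∈ univ.filter (fun i => c i = k), |R i j| := by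
        gcongr; exact abs_sum_le_sum_abs _ _
    _ = ∑ i, ∑ j, |R i j| := by
        simp only [sum_comm (γ := σ), sum_fiberwise]

lemma sum_card_mul_sum_abs_clusterMean_mul_of_injective {c : ι → κ}
    (hc : Function.Injective c) (R : Matrix ι σ ℝ) :
    ∑ k, ((univ.filter (fun i => c i = k)).card : ℝ) * ∑ j, |(clusterMean c * R) k j| =
      ∑ i, ∑ j, |R i j| := by
  have hfiber (k : κ) : #(univ.filter (fun i => c i = k)) ≤ 1 :=
    card_le_one.2 fun a ha b hb => hc ((mem_filter.1 ha).2.trans (mem_filter.1 hb).2.symm)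
  rw [sum_card_mul_sum_abs_clusterMean_mul_eq]
  simp only [abs_sum_eq_sum_abs_of_card_le_one (hfiber _), sum_comm (γ := σ), sum_fiberwise]

end ClusterMean

theorem stmt_7_general {m q n K : ℕ}
    (f : ∀ {r : ℕ}, Matrix (Fin m) (Fin q) ℝ → Matrix (Fin r) (Fin m) ℝ →
      Matrix (Fin r) (Fin q) ℝ)
    (hf : ∀ {p r : ℕ} (X : Matrix (Fin m) (Fin q) ℝ)
      (W : Matrix (Fin p) (Fin r) ℝ) (A : Matrix (Fin r) (Fin m) ℝ),
      f X (W * A) = W * f X A)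
    (c : Fin n → Fin K)
    (B : Matrix (Fin n) (Fin q) ℝ) (A : Matrix (Fin n) (Fin m) ℝ)
    (Bagg : Matrix (Fin K) (Fin q) ℝ) (Aagg : Matrix (Fin K) (Fin m) ℝ)
    (hBagg : ∀ k j, Bagg k j =
      (∑ i ∈ univ.filter (fun i => c i = k), B i j) /
        ((univ.filter (fun i => c i = k)).card : ℝ))
    (hAagg : ∀ k j, Aagg k j =
      (∑ i ∈ univ.filter (fun i => c i = k), A i j) /
        ((univ.filter (fun i => c i = k)).card : ℝ))
    (Φ : Set (Matrix (Fin m) (Fin q) ℝ))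
    (Xagg Xstar : Matrix (Fin m) (Fin q) ℝ) (hXagg : Xagg ∈ Φ) (hXstar : Xstar ∈ Φ)
    (hoptagg : ∀ X ∈ Φ,
      (∑ k, ((univ.filter (fun i => c i = k)).card : ℝ) *
        ∑ j, |Bagg k j - f Xagg Aagg k j|) ≤
      (∑ k, ((univ.filter (fun i => c i = k)).card : ℝ) *
        ∑ j, |Bagg k j - f X Aagg k j|))
    (hoptstar : ∀ X ∈ Φ,
      (∑ i, ∑ j, |B i j - f Xstar A i j|) ≤ ∑ i, ∑ j, |B i j - f X A i j|) :
    (∑ k, ((univ.filter (fun i => c i = k)).card : ℝ) *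
        ∑ j, |Bagg k j - f Xagg Aagg k j|) ≤
      (∑ i, ∑ j, |B i j - f Xstar A i j|) ∧
    (Function.Injective c →
      (∑ k, ((univ.filter (fun i => c i = k)).card : ℝ) *
          ∑ j, |Bagg k j - f Xagg Aagg k j|) =
        ∑ i, ∑ j, |B i j - f Xstar A i j|) := by
  have hB : Bagg = clusterMean c * B := by ext k j; rw [hBagg, clusterMean_mul_apply]
  have hA : Aagg = clusterMean c * A := by ext k j; rw [hAagg, clusterMean_mul_apply]
  have hres (X : Matrix (Fin m) (Fin q) ℝ) : Bagg - f X Aagg = clusterMean c * (B - f X A) := by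
    rw [hB, hA, hf, Matrix.mul_sub]
  have hagg_le (X : Matrix (Fin m) (Fin q) ℝ) :
      (∑ k, ((univ.filter (fun i => c i = k)).card : ℝ) * ∑ j, |Bagg k j - f X Aagg k j|) ≤
        ∑ i, ∑ j, |B i j - f X A i j| := by
    have := sum_card_mul_sum_abs_clusterMean_mul_le c (B - f X A)
    rwa [← hres] at this
  have hle := (hoptagg Xstar hXstar).trans (hagg_le Xstar)
  refine ⟨hle, fun hc => ?_⟩
  have hagg_eq : (∑ k, ((univ.filter (fun i => c i = k)).card : ℝ) *
      ∑ j, |Bagg k j - f Xagg Aagg k j|) = ∑ i, ∑ j, |B i j - f Xagg A i j| := by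
    have := sum_card_mul_sum_abs_clusterMean_mul_of_injective hc (B - f Xagg A)
    rwa [← hres] at this
  exact le_antisymm hle (hagg_eq ▸ hoptstar Xagg hXagg)

/-- The optimal value of the aggregated problem is a lower bound on the optimal
value `E*` of the original problem, with equality for the finest (singleton)
partition. -/
theorem stmt_7 {m q n K : ℕ}
    (f : ∀ {r : ℕ}, Matrix (Fin m) (Fin q) ℝ → Matrix (Fin r) (Fin m) ℝ →
      Matrix (Fin r) (Fin q) ℝ)
    (hf : ∀ {p r : ℕ} (X : Matrix (Fin m) (Fin q) ℝ)
      (W : Matrix (Fin p) (Fin r) ℝ) (A : Matrix (Fin r) (Fin m) ℝ),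
      f X (W * A) = W * f X A)
    (c : Fin n → Fin K) (hc : ∀ k, ∃ i, c i = k)
    (B : Matrix (Fin n) (Fin q) ℝ) (A : Matrix (Fin n) (Fin m) ℝ)
    (Bagg : Matrix (Fin K) (Fin q) ℝ) (Aagg : Matrix (Fin K) (Fin m) ℝ)
    (hBagg : ∀ k j, Bagg k j =
      (∑ i ∈ univ.filter (fun i => c i = k), B i j) /
        ((univ.filter (fun i => c i = k)).card : ℝ))
    (hAagg : ∀ k j, Aagg k j =
      (∑ i ∈ univ.filter (fun i => c i = k), A i j) /
        ((univ.filter (fun i => c i = k)).card : ℝ))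
    (Φ : Set (Matrix (Fin m) (Fin q) ℝ))
    (Xagg Xstar : Matrix (Fin m) (Fin q) ℝ) (hXagg : Xagg ∈ Φ) (hXstar : Xstar ∈ Φ)
    (hoptagg : ∀ X ∈ Φ,
      (∑ k, ((univ.filter (fun i => c i = k)).card : ℝ) *
        ∑ j, |Bagg k j - f Xagg Aagg k j|) ≤
      (∑ k, ((univ.filter (fun i => c i = k)).card : ℝ) *
        ∑ j, |Bagg k j - f X Aagg k j|))
    (hoptstar : ∀ X ∈ Φ,
      (∑ i, ∑ j, |B i j - f Xstar A i j|) ≤ ∑ i, ∑ j, |B i j - f X A i j|) :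
    (∑ k, ((univ.filter (fun i => c i = k)).card : ℝ) *
        ∑ j, |Bagg k j - f Xagg Aagg k j|) ≤
      (∑ i, ∑ j, |B i j - f Xstar A i j|) ∧
    (Function.Injective c →
      (∑ k, ((univ.filter (fun i => c i = k)).card : ℝ) *
          ∑ j, |Bagg k j - f Xagg Aagg k j|) =
        ∑ i, ∑ j, |B i j - f Xstar A i j|) :=
  stmt_7_general f hf c B A Bagg Aagg hBagg hAagg Φ Xagg Xstar hXagg hXstar hoptagg hoptstar
end

section
/- Finite convergence of AID: under the aggregation assumption f(X, WA) = W f(X,A), if in each iteration every cluster violating the sign-based optimality condition is split into strictly smaller nonempty sub-clusters, then the iterative procedure terminates in finitely many iterations, and at termination the solution of the aggregated problem is a global optimum of the original problem min_{X∈Φ} ‖B − f(X,A)‖₁. -/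
/-!
Averaging over clusters is left multiplication by an averaging matrix, so the aggregation assumption
turns the aggregated residual of a cluster into the mean of its residuals, and the aggregated
objective into `∑_S ∑_j |∑_{i ∈ S} r_ij|`. By the triangle inequality this is a lower bound
for the original objective `∑_i ∑_j |r_ij|`, with equality when the residuals share
signs within each cluster. Hence an aggregated optimum satisfying the sign condition is a
global optimum. The condition is reached because every violation strictly increases the
number of clusters, which is at most `n`.
-/

open Finset

/-- Aggregated data matrix of `A` for the partition `P`: one row per cluster,
equal to the within-cluster arithmetic mean of the rows of `A`. -/
noncomputable def aggMat {n m : ℕ} (P : Finpartition (Finset.univ : Finset (Fin n)))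
    (A : Matrix (Fin n) (Fin m) ℝ) : Matrix {S // S ∈ P.parts} (Fin m) ℝ :=
  fun S j => (∑ i ∈ S.1, A i j) / (S.1.card : ℝ)

/-- Weighted aggregated L1 objective for partition `P` and parameter `X`. -/
noncomputable def aggObj {n m q : ℕ}
    (f : Matrix (Fin m) (Fin q) ℝ → ∀ {ι : Type} [Fintype ι],
      Matrix ι (Fin m) ℝ → Matrix ι (Fin q) ℝ)
    (B : Matrix (Fin n) (Fin q) ℝ) (A : Matrix (Fin n) (Fin m) ℝ)
    (P : Finpartition (Finset.univ : Finset (Fin n)))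
    (X : Matrix (Fin m) (Fin q) ℝ) : ℝ :=
  ∑ S : {S // S ∈ P.parts}, (S.1.card : ℝ) *
    ∑ j, |aggMat P B S j - f X (aggMat P A) S j|

/-- Sign-based optimality condition: within every cluster the residuals share
coordinatewise signs. -/
def signOK {n m q : ℕ}
    (f : Matrix (Fin m) (Fin q) ℝ → ∀ {ι : Type} [Fintype ι],
      Matrix ι (Fin m) ℝ → Matrix ι (Fin q) ℝ)
    (B : Matrix (Fin n) (Fin q) ℝ) (A : Matrix (Fin n) (Fin m) ℝ)
    (P : Finpartition (Finset.univ : Finset (Fin n)))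
    (X : Matrix (Fin m) (Fin q) ℝ) : Prop :=
  ∀ S ∈ P.parts, ∀ j, (∀ i ∈ S, 0 ≤ B i j - f X A i j) ∨
    (∀ i ∈ S, B i j - f X A i j ≤ 0)


theorem Nat.exists_of_bounded_of_lt_succ {a : ℕ → ℕ} {N : ℕ} {p : ℕ → Prop}
    (hle : ∀ t, a t ≤ N) (hlt : ∀ t, ¬ p t → a t < a (t + 1)) : ∃ t, p t := by
  by_contra! h
  have hmono : StrictMono a := strictMono_nat_of_lt_succ fun t => hlt t (h t)
  exact Nat.not_succ_le_self N ((hmono.id_le (N + 1)).trans (hle (N + 1)))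

theorem Finset.abs_sum_eq_sum_abs_of_nonneg_or_nonpos {ι G : Type*} [AddCommGroup G]
    [LinearOrder G] [IsOrderedAddMonoid G] {s : Finset ι} {g : ι → G}
    (h : (∀ i ∈ s, 0 ≤ g i) ∨ (∀ i ∈ s, g i ≤ 0)) :
    |∑ i ∈ s, g i| = ∑ i ∈ s, |g i| := by
  rcases h with h | h
  · rw [abs_of_nonneg (sum_nonneg h)]
    exact sum_congr rfl fun i hi => (abs_of_nonneg (h i hi)).symm
  · rw [abs_of_nonpos (sum_nonpos h), ← sum_neg_distrib]
    exact sum_congr rfl fun i hi => (abs_of_nonpos (h i hi)).symm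

theorem Finpartition.sum_sum_parts {ι M : Type*} [DecidableEq ι] [AddCommMonoid M]
    {s : Finset ι} (P : Finpartition s) (g : ι → M) :
    ∑ S ∈ P.parts, ∑ i ∈ S, g i = ∑ i ∈ s, g i := by
  conv_rhs => rw [← P.biUnion_parts]
  exact (sum_biUnion P.supIndep.pairwiseDisjoint).symm

section Aggregation

variable {n m q : ℕ}
  (f : Matrix (Fin m) (Fin q) ℝ → ∀ {ι : Type} [Fintype ι],
    Matrix ι (Fin m) ℝ → Matrix ι (Fin q) ℝ)
  (hf : ∀ {ι κ : Type} [Fintype ι] [Fintype κ]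
    (X : Matrix (Fin m) (Fin q) ℝ) (W : Matrix κ ι ℝ) (A : Matrix ι (Fin m) ℝ),
    f X (W * A) = W * f X A)
  (B : Matrix (Fin n) (Fin q) ℝ) (A : Matrix (Fin n) (Fin m) ℝ)
  (P : Finpartition (Finset.univ : Finset (Fin n)))
  (X : Matrix (Fin m) (Fin q) ℝ)

noncomputable def avgMat : Matrix {S // S ∈ P.parts} (Fin n) ℝ :=
  fun S i => if i ∈ S.1 then (S.1.card : ℝ)⁻¹ else 0

theorem avgMat_mul_apply {k : ℕ} (M : Matrix (Fin n) (Fin k) ℝ) (S : {S // S ∈ P.parts})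
    (j : Fin k) : (avgMat P * M) S j = (∑ i ∈ S.1, M i j) / (S.1.card : ℝ) := by
  simp only [Matrix.mul_apply, avgMat, ite_mul, zero_mul, sum_ite_mem, univ_inter,
    ← mul_sum, div_eq_inv_mul]

theorem aggMat_eq_avgMat_mul {k : ℕ} (M : Matrix (Fin n) (Fin k) ℝ) :
    aggMat P M = avgMat P * M := by
  ext S j
  rw [avgMat_mul_apply]
  rfl

include hf in
theorem aggMat_residual_apply (S : {S // S ∈ P.parts}) (j : Fin q) :
    aggMat P B S j - f X (aggMat P A) S j
      = (∑ i ∈ S.1, (B i j - f X A i j)) / (S.1.card : ℝ) := by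
  rw [aggMat_eq_avgMat_mul, aggMat_eq_avgMat_mul, hf, avgMat_mul_apply, avgMat_mul_apply,
    div_sub_div_same, sum_sub_distrib]

include hf in
theorem aggObj_eq_sum_abs_sum :
    aggObj f B A P X = ∑ S ∈ P.parts, ∑ j, |∑ i ∈ S, (B i j - f X A i j)| := by
  rw [aggObj, ← sum_coe_sort P.parts]
  refine sum_congr rfl fun S _ => ?_
  have hcard : (0 : ℝ) < S.1.card := by
    exact_mod_cast (P.nonempty_of_mem_parts S.2).card_pos
  simp_rw [aggMat_residual_apply f hf, abs_div, abs_of_pos hcard, ← sum_div,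
    mul_div_cancel₀ _ hcard.ne']

include hf in
theorem aggObj_le_sum_abs :
    aggObj f B A P X ≤ ∑ i, ∑ j, |B i j - f X A i j| := by
  rw [aggObj_eq_sum_abs_sum f hf, ← P.sum_sum_parts]
  refine sum_le_sum fun S _ => ?_
  rw [sum_comm]
  exact sum_le_sum fun j _ => abs_sum_le_sum_abs _ _

include hf in
theorem aggObj_eq_sum_abs_of_signOK (h : signOK f B A P X) :
    aggObj f B A P X = ∑ i, ∑ j, |B i j - f X A i j| := by
  rw [aggObj_eq_sum_abs_sum f hf, ← P.sum_sum_parts]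
  refine sum_congr rfl fun S hS => ?_
  rw [sum_comm]
  exact sum_congr rfl fun j _ => abs_sum_eq_sum_abs_of_nonneg_or_nonpos (h S hS j)

end Aggregation

theorem stmt_11_general {n m q : ℕ}
    (f : Matrix (Fin m) (Fin q) ℝ → ∀ {ι : Type} [Fintype ι],
      Matrix ι (Fin m) ℝ → Matrix ι (Fin q) ℝ)
    (hf : ∀ {ι κ : Type} [Fintype ι] [Fintype κ]
      (X : Matrix (Fin m) (Fin q) ℝ) (W : Matrix κ ι ℝ) (A : Matrix ι (Fin m) ℝ),
      f X (W * A) = W * f X A)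
    (B : Matrix (Fin n) (Fin q) ℝ) (A : Matrix (Fin n) (Fin m) ℝ)
    (Φ : Set (Matrix (Fin m) (Fin q) ℝ))
    (P : ℕ → Finpartition (Finset.univ : Finset (Fin n)))
    (Xb : ℕ → Matrix (Fin m) (Fin q) ℝ)
    (hXb : ∀ t, Xb t ∈ Φ ∧ ∀ Y ∈ Φ, aggObj f B A (P t) (Xb t) ≤ aggObj f B A (P t) Y)
    (hstep : ∀ t, ¬ signOK f B A (P t) (Xb t) →
      (P t).parts.card < (P (t + 1)).parts.card) :
    ∃ T, signOK f B A (P T) (Xb T) ∧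
      ∀ Y ∈ Φ, (∑ i, ∑ j, |B i j - f (Xb T) A i j|) ≤
        ∑ i, ∑ j, |B i j - f Y A i j| := by
  obtain ⟨T, hT⟩ : ∃ T, signOK f B A (P T) (Xb T) :=
    Nat.exists_of_bounded_of_lt_succ (fun t => (P t).card_parts_le_card) hstep
  refine ⟨T, hT, fun Y hY => ?_⟩
  calc (∑ i, ∑ j, |B i j - f (Xb T) A i j|)
      = aggObj f B A (P T) (Xb T) := (aggObj_eq_sum_abs_of_signOK f hf B A (P T) _ hT).symm
    _ ≤ aggObj f B A (P T) Y := (hXb T).2 Y hY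
    _ ≤ ∑ i, ∑ j, |B i j - f Y A i j| := aggObj_le_sum_abs f hf B A (P T) Y

/-- Finite convergence of AID: if each aggregated problem is solved optimally and
whenever the sign condition is violated the partition is strictly refined, then
after finitely many iterations the sign condition holds and the aggregated
solution is a global optimum of the original problem. -/
theorem stmt_11 {n m q : ℕ}
    (f : Matrix (Fin m) (Fin q) ℝ → ∀ {ι : Type} [Fintype ι],
      Matrix ι (Fin m) ℝ → Matrix ι (Fin q) ℝ)
    (hf : ∀ {ι κ : Type} [Fintype ι] [Fintype κ]
      (X : Matrix (Fin m) (Fin q) ℝ) (W : Matrix κ ι ℝ) (A : Matrix ι (Fin m) ℝ),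
      f X (W * A) = W * f X A)
    (B : Matrix (Fin n) (Fin q) ℝ) (A : Matrix (Fin n) (Fin m) ℝ)
    (Φ : Set (Matrix (Fin m) (Fin q) ℝ))
    (P : ℕ → Finpartition (Finset.univ : Finset (Fin n)))
    (Xb : ℕ → Matrix (Fin m) (Fin q) ℝ)
    (hXb : ∀ t, Xb t ∈ Φ ∧ ∀ Y ∈ Φ, aggObj f B A (P t) (Xb t) ≤ aggObj f B A (P t) Y)
    (href : ∀ t, ∀ S ∈ (P (t + 1)).parts, ∃ S' ∈ (P t).parts, S ⊆ S')
    (hstep : ∀ t, ¬ signOK f B A (P t) (Xb t) →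
      (P t).parts.card < (P (t + 1)).parts.card) :
    ∃ T, signOK f B A (P T) (Xb T) ∧
      ∀ Y ∈ Φ, (∑ i, ∑ j, |B i j - f (Xb T) A i j|) ≤
        ∑ i, ∑ j, |B i j - f Y A i j| :=
  stmt_11_general f hf B A Φ P Xb hXb hstep
end
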